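/- arXiv:2511.17109 — 7 statements merged into one kernel-verified Lean document; each statement's English description precedes it below -/
import Mathlib

section
/- Let K be a field, n ≥ 1, and let M, G be n × n matrices over K. Assume G is invertible (IsUnit G.det), c : K is nonzero, and Mᵀ * G * M = c • G. Then M is invertible, and M is similar to c • M⁻¹; that is, there exists an n × n matrix P over K with IsUnit P.det such that P⁻¹ * M * P = c • M⁻¹. -/
open Matrix Polynomial Module DirectSum

set_option maxHeartbeats 1000000

/-- On the cyclic module `K[X]/(q)` there is a `K`-linear functional `ℓ` such that the
pairing `(a, b) ↦ ℓ (a * b)` is nondegenerate. -/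
private lemma exists_functional {K : Type*} [Field K] (q : K[X]) (hq : q ≠ 0) :
    ∃ ℓ : (K[X] ⧸ (K[X] ∙ q)) →ₗ[K] K,
      ∀ a : K[X] ⧸ (K[X] ∙ q), a ≠ 0 → ∃ b, ℓ (a * b) ≠ 0 := by
  classical
  set d := q.natDegree with hd
  let bas : Basis (Fin q.natDegree) K (K[X] ⧸ (K[X] ∙ q)) := (AdjoinRoot.powerBasis hq).basis
  let g : K[X] ⧸ (K[X] ∙ q) := (AdjoinRoot.powerBasis hq).gen
  have hbas : ∀ i : Fin q.natDegree, bas i = g ^ (i : ℕ) := fun i =>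
    congrFun (AdjoinRoot.powerBasis hq).coe_basis i
  rcases Nat.eq_zero_or_pos d with h0 | hpos
  · -- the module is trivial
    refine ⟨0, fun a ha => absurd ?_ ha⟩
    haveI : IsEmpty (Fin q.natDegree) := by rw [← hd, h0]; infer_instance
    have := bas.sum_repr a
    rwa [Finset.univ_eq_empty, Finset.sum_empty, eq_comm] at this
  · have hlt : d - 1 < d := by omega
    refine ⟨bas.coord ⟨d - 1, hlt⟩, fun a ha => ?_⟩
    set ℓ := bas.coord ⟨d - 1, hlt⟩ with hℓ
    have hgen : ∀ m : ℕ, (hm : m < d) →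
        ℓ (g ^ m) = if m = d - 1 then 1 else 0 := by
      intro m hm
      have hbm : g ^ m = bas ⟨m, hm⟩ := (hbas ⟨m, hm⟩).symm
      rw [hbm, hℓ, Basis.coord_apply, Basis.repr_self, Finsupp.single_apply]
      simp [Fin.ext_iff]
    have hc : bas.repr a ≠ 0 := by
      simpa using (LinearEquiv.map_ne_zero_iff bas.repr).mpr ha
    set c := bas.repr a with hcdef
    have hS : c.support.Nonempty := Finsupp.support_nonempty_iff.mpr hc
    set k := c.support.max' hS with hk
    have hkmem : k ∈ c.support := c.support.max'_mem hS
    have hck : c k ≠ 0 := Finsupp.mem_support_iff.mp hkmem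
    refine ⟨g ^ (d - 1 - k.1), ?_⟩
    have hrepr : ∑ j : Fin q.natDegree, c j • bas j = a := bas.sum_repr a
    have hmul : a * g ^ (d - 1 - k.1)
        = ∑ j : Fin q.natDegree, c j • (g ^ (j.1 + (d - 1 - k.1))) := by
      rw [← hrepr, Finset.sum_mul]
      refine Finset.sum_congr rfl fun j _ => ?_
      rw [smul_mul_assoc, hbas j, ← pow_add]
    rw [hmul, map_sum]
    have hsum : ∀ j : Fin q.natDegree, j ≠ k →
        ℓ (c j • g ^ (j.1 + (d - 1 - k.1))) = 0 := by
      intro j hj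
      rw [_root_.map_smul, smul_eq_mul]
      by_cases hjS : j ∈ c.support
      · have hle : j ≤ k := c.support.le_max' j hjS
        have hjk : j.1 < k.1 := lt_of_le_of_ne (by exact_mod_cast hle)
          (fun hcon => hj (Fin.ext hcon))
        have hkd : k.1 < d := k.2
        rw [hgen _ (by omega), if_neg (by omega), mul_zero]
      · rw [Finsupp.notMem_support_iff.mp hjS, zero_mul]
    rw [Finset.sum_eq_single k (fun j _ hj => hsum j hj) (by simp)]
    have hkd : k.1 < d := k.2
    rw [_root_.map_smul, smul_eq_mul, hgen _ (by omega), if_pos (by omega), mul_one]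
    exact hck

/-- Every square matrix over a field is intertwined with its transpose by an
invertible matrix: there is `Q` with `IsUnit Q.det` and `Q * M = Mᵀ * Q`. -/
private lemma exists_intertwiner {K : Type*} [Field K] {n : ℕ}
    (M : Matrix (Fin n) (Fin n) K) :
    ∃ Q : Matrix (Fin n) (Fin n) K, IsUnit Q.det ∧ Q * M = Mᵀ * Q := by
  classical
  set φ := M.mulVecLin with hφ
  -- the space as a torsion `K[X]`-module via `M`
  have hT : Module.IsTorsion K[X] (Module.AEval' φ) := by
    intro x
    refine ⟨⟨φ.charpoly, mem_nonZeroDivisors_of_ne_zero φ.charpoly_monic.ne_zero⟩, ?_⟩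
    rw [Submonoid.mk_smul]
    apply (Module.AEval'.of φ).symm.injective
    rw [Module.AEval.of_symm_smul, LinearMap.aeval_self_charpoly]
    simp
  obtain ⟨ι, hι, p, hp, e, ⟨ψ⟩⟩ :=
    Module.equiv_directSum_of_isTorsion (R := K[X]) (M := Module.AEval' φ) hT
  choose ℓ hℓ using fun i : ι =>
    exists_functional (p i ^ e i) (pow_ne_zero _ (hp i).ne_zero)
  obtain ⟨ε, hε⟩ : ∃ ε : (Fin n → K) ≃ₗ[K] ⨁ i, K[X] ⧸ (K[X] ∙ (p i ^ e i)),
      ∀ u, ε u = (ψ.restrictScalars K) ((Module.AEval'.of φ) u) :=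
    ⟨(Module.AEval'.of φ).trans (ψ.restrictScalars K), fun u =>
      LinearEquiv.trans_apply _⟩
  -- the bilinear form
  obtain ⟨B, hBapp⟩ : ∃ B : (Fin n → K) →ₗ[K] (Fin n → K) →ₗ[K] K,
      ∀ u v, B u v = ∑ i, ℓ i ((ε u) i * (ε v) i) :=
    ⟨LinearMap.mk₂ K (fun u v => ∑ i, ℓ i ((ε u) i * (ε v) i))
      (fun u u' v => by
        simp_rw [map_add, DirectSum.add_apply, add_mul, _root_.map_add,
          Finset.sum_add_distrib])
      (fun s u v => by
        simp_rw [_root_.map_smul, DirectSum.smul_apply, smul_mul_assoc, _root_.map_smul,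
          smul_eq_mul, Finset.mul_sum])
      (fun u v v' => by
        simp_rw [map_add, DirectSum.add_apply, mul_add, _root_.map_add,
          Finset.sum_add_distrib])
      (fun s u v => by
        simp_rw [_root_.map_smul, DirectSum.smul_apply, mul_smul_comm, _root_.map_smul,
          smul_eq_mul, Finset.mul_sum]),
      fun u v => LinearMap.mk₂_apply _ _ _ _⟩
  set Q : Matrix (Fin n) (Fin n) K :=
    Matrix.of (fun i j => B (Pi.single i 1) (Pi.single j 1)) with hQ
  have hQapp : ∀ i j, Q i j = B (Pi.single i 1) (Pi.single j 1) := fun i j => rfl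
  have hsingle : ∀ w : Fin n → K, w = ∑ j, w j • (Pi.single j 1 : Fin n → K) := by
    intro w
    funext x
    rw [Finset.sum_apply]
    simp [Pi.single_apply, eq_comm]
  have expand : ∀ (w : Fin n → K) (L : (Fin n → K) →ₗ[K] K),
      L w = ∑ j, w j * L (Pi.single j 1) := by
    intro w L
    conv_lhs => rw [hsingle w]
    rw [map_sum]
    simp_rw [_root_.map_smul, smul_eq_mul]
  have key1 : ∀ u v, B u v = u ⬝ᵥ Q *ᵥ v := by
    intro u v
    rw [show (B u) v = ∑ j, v j * (B u) (Pi.single j 1) from expand v (B u)]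
    have : ∀ j, B u (Pi.single j 1) = ∑ i, u i * B (Pi.single i 1) (Pi.single j 1) := by
      intro j
      rw [show B u (Pi.single j 1) = B.flip (Pi.single j 1) u from rfl,
        expand u (B.flip (Pi.single j 1))]
      simp [LinearMap.flip_apply]
    simp_rw [this, dotProduct, Matrix.mulVec, dotProduct, hQapp,
      Finset.mul_sum]
    rw [Finset.sum_comm]
    refine Finset.sum_congr rfl fun j _ => Finset.sum_congr rfl fun i _ => by ring
  have hX : ∀ u, ε (M *ᵥ u) = (X : K[X]) • ε u := by
    intro u
    have hMu : M *ᵥ u = φ u := by rw [hφ, Matrix.mulVecLin_apply]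
    rw [hε, hε, LinearEquiv.restrictScalars_apply, LinearEquiv.restrictScalars_apply, hMu,
      ← Module.AEval'.X_smul_of]
    exact _root_.map_smul ψ _ _
  have key2 : ∀ u v, B (M *ᵥ u) v = B u (M *ᵥ v) := by
    intro u v
    rw [hBapp, hBapp, hX u, hX v]
    refine Finset.sum_congr rfl fun i _ => ?_
    rw [DirectSum.smul_apply, DirectSum.smul_apply, smul_mul_assoc, mul_smul_comm]
  -- nondegeneracy
  have hdet : Q.det ≠ 0 := by
    intro hzero
    have hzero' : Qᵀ.det = 0 := by rwa [Matrix.det_transpose]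
    obtain ⟨v, hv0, hv⟩ := (Matrix.exists_mulVec_eq_zero_iff).mpr hzero'
    have hBv : ∀ w, B v w = 0 := by
      intro w
      rw [key1, Matrix.dotProduct_mulVec, ← Matrix.mulVec_transpose, hv]
      simp
    have hcomp : ∀ i b, ℓ i ((ε v) i * b) = 0 := by
      intro i b
      have := hBv (ε.symm (DirectSum.of _ i b))
      rw [hBapp, ε.apply_symm_apply] at this
      rwa [Finset.sum_eq_single i
        (fun j _ hj => by rw [DirectSum.of_eq_of_ne _ _ _ hj]; simp)
        (by simp), DirectSum.of_eq_same] at this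
    have hεv : ε v = 0 := by
      refine DFinsupp.ext fun i => ?_
      by_contra hne
      obtain ⟨b, hb⟩ := hℓ i _ hne
      exact hb (hcomp i b)
    exact hv0 (ε.map_eq_zero_iff.mp hεv)
  refine ⟨Q, isUnit_iff_ne_zero.mpr hdet, ?_⟩
  -- Q * M = Mᵀ * Q  (note: we show Mᵀ * Q = Q * M and flip)
  have hdot : ∀ u w, u ⬝ᵥ (Mᵀ * Q) *ᵥ w = u ⬝ᵥ (Q * M) *ᵥ w := by
    intro u w
    rw [← Matrix.mulVec_mulVec, ← Matrix.mulVec_mulVec]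
    rw [Matrix.dotProduct_mulVec u Mᵀ, Matrix.vecMul_transpose]
    rw [← key1, ← key1, key2]
  ext i j
  have := hdot (Pi.single i 1) (Pi.single j 1)
  simpa [Matrix.mulVec_single, single_dotProduct] using this.symm

/-- If `M` scales a nondegenerate bilinear form with Gram matrix `G` by a nonzero
factor `c` (i.e. `Mᵀ * G * M = c • G` with `G` invertible), then `M` is invertible
and `M` is similar to `c • M⁻¹`. -/
theorem similar_to_scaled_inverse_of_preserves_form {K : Type*} [Field K] {n : ℕ}
    (hn : 1 ≤ n) (M G : Matrix (Fin n) (Fin n) K) (hG : IsUnit G.det) (c : K)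
    (hc : c ≠ 0) (h : Mᵀ * G * M = c • G) :
    IsUnit M.det ∧
      ∃ P : Matrix (Fin n) (Fin n) K, IsUnit P.det ∧ P⁻¹ * M * P = c • M⁻¹ := by
  have hdetM : IsUnit M.det := by
    have hd := congrArg Matrix.det h
    rw [Matrix.det_mul, Matrix.det_mul, Matrix.det_transpose, Matrix.det_smul] at hd
    have hG0 : G.det ≠ 0 := hG.ne_zero
    have hcn : (c : K) ^ (Fintype.card (Fin n)) ≠ 0 := pow_ne_zero _ hc
    refine isUnit_iff_ne_zero.mpr fun hM0 => ?_
    rw [hM0, mul_zero] at hd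
    exact (mul_ne_zero hcn hG0) hd.symm
  refine ⟨hdetM, ?_⟩
  obtain ⟨Q, hQdet, hQM⟩ := exists_intertwiner M
  set P := G⁻¹ * Q with hP
  have hPdet : IsUnit P.det := by
    rw [hP, Matrix.det_mul]
    exact (G.isUnit_nonsing_inv_det hG).mul hQdet
  refine ⟨P, hPdet, ?_⟩
  -- first: `Mᵀ = c • (G * M⁻¹ * G⁻¹)`
  have step1 : Mᵀ * G = c • G * M⁻¹ := by
    have h1 : Mᵀ * G * M * M⁻¹ = (c • G) * M⁻¹ := by rw [h]
    rwa [Matrix.mul_nonsing_inv_cancel_right _ _ hdetM] at h1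
  have step2 : Mᵀ = c • (G * M⁻¹ * G⁻¹) := by
    have h2 : Mᵀ * G * G⁻¹ = (c • G * M⁻¹) * G⁻¹ := by rw [step1]
    rwa [Matrix.mul_nonsing_inv_cancel_right _ _ hG, Matrix.smul_mul, Matrix.smul_mul] at h2
  -- key: `M * G⁻¹ * Mᵀ = c • G⁻¹`
  have hMGM : M * G⁻¹ * Mᵀ = c • G⁻¹ := by
    rw [step2, Matrix.mul_smul]
    congr 1
    rw [Matrix.mul_assoc, Matrix.mul_assoc, Matrix.nonsing_inv_mul_cancel_left _ _ hG,
      ← Matrix.mul_assoc, Matrix.mul_nonsing_inv _ hdetM, Matrix.one_mul]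
  -- hence `M * P * M = c • P`
  have hMPM : M * P * M = c • P := by
    rw [hP, ← Matrix.mul_assoc, Matrix.mul_assoc (M * G⁻¹) Q M, hQM,
      ← Matrix.mul_assoc, hMGM, Matrix.smul_mul]
  -- conclude
  have hPP : P⁻¹ * P = 1 := Matrix.nonsing_inv_mul _ hPdet
  calc P⁻¹ * M * P = P⁻¹ * (M * P * M) * M⁻¹ := by
        simp only [Matrix.mul_assoc]
        rw [Matrix.mul_nonsing_inv _ hdetM, Matrix.mul_one]
    _ = P⁻¹ * (c • P) * M⁻¹ := by rw [hMPM]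
    _ = c • M⁻¹ := by
        rw [Matrix.mul_smul, Matrix.smul_mul, hPP, Matrix.one_mul]
end

section
/- Let K be a field, n ≥ 1, and let M, G be n × n matrices over K. Assume G is invertible (IsUnit G.det), c : K is nonzero, and Mᵀ * G * M = c • G. Then for every nonzero λ : K and every natural number e, the rank of (M - λ • 1)^e equals the rank of (M - (c * λ⁻¹) • 1)^e. (In particular, for every eigenvalue λ and every e ≥ 1, the number of e × e Jordan blocks of M for the eigenvalue λ equals the number of e × e Jordan blocks for the eigenvalue c/λ.) -/
open Matrix

/-- If `M` scales a nondegenerate bilinear form with Gram matrix `G` by a nonzero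
factor `c`, then for every nonzero `λ` and every `e`, the rank of `(M - λ • 1)^e`
equals the rank of `(M - (c * λ⁻¹) • 1)^e`; hence the Jordan block structure of `M`
at the eigenvalue `λ` agrees with that at `c / λ`. -/
theorem rank_pow_sub_smul_one_eq_of_preserves_form {K : Type*} [Field K] {n : ℕ}
    (hn : 1 ≤ n) (M G : Matrix (Fin n) (Fin n) K) (hG : IsUnit G.det) (c : K)
    (hc : c ≠ 0) (h : Mᵀ * G * M = c • G) :
    ∀ lam : K, lam ≠ 0 → ∀ e : ℕ,
      ((M - lam • (1 : Matrix (Fin n) (Fin n) K)) ^ e).rank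
        = ((M - (c * lam⁻¹) • (1 : Matrix (Fin n) (Fin n) K)) ^ e).rank := by
  intro lam hlam e
  have hGd : G.det ≠ 0 := hG.ne_zero
  have hMdet : IsUnit M.det := by
    refine isUnit_iff_ne_zero.mpr fun h0 => ?_
    have hd := congrArg Matrix.det h
    rw [Matrix.det_mul, Matrix.det_mul, Matrix.det_transpose, Matrix.det_smul] at hd
    simp only [h0, zero_mul, mul_zero] at hd
    exact (mul_ne_zero (pow_ne_zero _ hc) hGd) hd.symm
  -- Mᵀ = c • (G * M⁻¹ * G⁻¹)
  have h1 : Mᵀ * G = c • (G * M⁻¹) := by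
    have := congrArg (· * M⁻¹) h
    simpa [Matrix.mul_assoc, Matrix.mul_nonsing_inv M hMdet, Matrix.smul_mul] using this
  have h2 : Mᵀ = c • (G * M⁻¹ * G⁻¹) := by
    have := congrArg (· * G⁻¹) h1
    simpa [Matrix.mul_assoc, Matrix.mul_nonsing_inv G hG, Matrix.smul_mul] using this
  have key : Mᵀ - lam • 1 = G * (c • M⁻¹ - lam • 1) * G⁻¹ := by
    rw [h2, Matrix.mul_sub, Matrix.sub_mul, Matrix.mul_smul, Matrix.smul_mul,
      Matrix.mul_smul, Matrix.smul_mul, Matrix.mul_one, Matrix.mul_nonsing_inv G hG,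
      Matrix.mul_assoc]
  have conj_pow : ∀ (A : Matrix (Fin n) (Fin n) K) (k : ℕ),
      (G * A * G⁻¹) ^ k = G * A ^ k * G⁻¹ := by
    intro A k
    induction k with
    | zero => simp [Matrix.mul_nonsing_inv G hG]
    | succ k ih =>
        rw [pow_succ, ih, pow_succ]
        simp only [Matrix.mul_assoc]
        rw [Matrix.nonsing_inv_mul_cancel_left G (A * G⁻¹) hG]
  -- decompose c • M⁻¹ - lam • 1
  have hfact : c • M⁻¹ - lam • 1 = ((-lam) • M⁻¹) * (M - (c * lam⁻¹) • 1) := by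
    rw [Matrix.smul_mul, Matrix.mul_sub, Matrix.nonsing_inv_mul M hMdet, Matrix.mul_smul,
      Matrix.mul_one, smul_sub, smul_smul,
      show (-lam) * (c * lam⁻¹) = -c by field_simp, neg_smul, neg_smul, sub_neg_eq_add]
    abel
  have hcomm : Commute ((-lam) • M⁻¹) (M - (c * lam⁻¹) • 1) := by
    refine Commute.smul_left ?_ _
    refine Commute.sub_right ?_ (Commute.smul_right (Commute.one_right _) _)
    show M⁻¹ * M = M * M⁻¹
    rw [Matrix.nonsing_inv_mul M hMdet, Matrix.mul_nonsing_inv M hMdet]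
  have hUdet : IsUnit ((((-lam) • M⁻¹) ^ e).det) := by
    rw [Matrix.det_pow]
    refine IsUnit.pow _ ?_
    rw [Matrix.det_smul]
    exact (isUnit_iff_ne_zero.mpr (pow_ne_zero _ (neg_ne_zero.mpr hlam))).mul
      (M.isUnit_nonsing_inv_det hMdet)
  -- chain of rank equalities
  have t1 : ((M - lam • (1 : Matrix (Fin n) (Fin n) K)) ^ e).rank
      = ((Mᵀ - lam • 1) ^ e).rank := by
    rw [← Matrix.rank_transpose ((M - lam • 1) ^ e), Matrix.transpose_pow,
      Matrix.transpose_sub, Matrix.transpose_smul, Matrix.transpose_one]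
  rw [t1, key, conj_pow,
    Matrix.rank_mul_eq_left_of_isUnit_det _ _ (G.isUnit_nonsing_inv_det hG),
    Matrix.rank_mul_eq_right_of_isUnit_det _ _ hG, hfact, hcomm.mul_pow,
    Matrix.rank_mul_eq_right_of_isUnit_det _ _ hUdet]
end

section
/- Let K be a field, n ≥ 1, and let M, G be n × n matrices over K. Assume G is invertible (IsUnit G.det), c : K is nonzero, and Mᵀ * G * M = c • G. Let P(t) = Matrix.charpoly M be the characteristic polynomial of M. Then (M.det)^2 = c^n, and for every nonzero t : K one has t^n * P.eval (c * t⁻¹) = (-1)^n * M.det * P.eval t. -/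
open Matrix Polynomial

lemma eval_charpoly_aux {K : Type*} [Field K] {n : ℕ} (M : Matrix (Fin n) (Fin n) K) (t : K) :
    (Matrix.charpoly M).eval t = (t • (1 : Matrix (Fin n) (Fin n) K) - M).det := by
  rw [Matrix.charpoly, _root_.eval_det, matPolyEquiv_charmatrix]
  simp only [eval_sub, eval_X, eval_C, Matrix.scalar, smul_eq_diagonal_mul]
  rw [mul_one]
  rfl

/-- Functional equation for the characteristic polynomial of a matrix scaling a
nondegenerate bilinear form by a nonzero factor `c`: `det(M)² = cⁿ` and
`tⁿ · P(c/t) = (-1)ⁿ · det(M) · P(t)` for all nonzero `t`. -/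
theorem charpoly_functional_equation_of_preserves_form {K : Type*} [Field K] {n : ℕ}
    (hn : 1 ≤ n) (M G : Matrix (Fin n) (Fin n) K) (hG : IsUnit G.det) (c : K)
    (hc : c ≠ 0) (h : Mᵀ * G * M = c • G) :
    M.det ^ 2 = c ^ n ∧
      ∀ t : K, t ≠ 0 →
        t ^ n * (Matrix.charpoly M).eval (c * t⁻¹)
          = (-1) ^ n * M.det * (Matrix.charpoly M).eval t := by
  have hGd : G.det ≠ 0 := hG.ne_zero
  have hdet : M.det ^ 2 = c ^ n := by
    have := congrArg Matrix.det h
    rw [Matrix.det_mul, Matrix.det_mul, Matrix.det_transpose, Matrix.det_smul,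
      Fintype.card_fin] at this
    rw [sq]
    refine mul_right_cancel₀ hGd ?_
    linear_combination this
  refine ⟨hdet, fun t ht => ?_⟩
  have key : G * (c • (1 : Matrix (Fin n) (Fin n) K) - t • M)
      = (Mᵀ - t • 1) * G * M := by
    rw [Matrix.mul_sub, Matrix.sub_mul, Matrix.sub_mul, h]
    simp [Matrix.mul_smul, Matrix.smul_mul]
  have hdetkey := congrArg Matrix.det key
  rw [Matrix.det_mul, Matrix.det_mul, Matrix.det_mul] at hdetkey
  have e : t • ((c * t⁻¹) • (1 : Matrix (Fin n) (Fin n) K) - M)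
      = c • (1 : Matrix (Fin n) (Fin n) K) - t • M := by
    rw [smul_sub, smul_smul]
    congr 2
    field_simp
  have lhs : t ^ n * (Matrix.charpoly M).eval (c * t⁻¹)
      = (c • (1 : Matrix (Fin n) (Fin n) K) - t • M).det := by
    rw [eval_charpoly_aux, ← e, Matrix.det_smul, Fintype.card_fin]
  have rhs : (Mᵀ - t • (1 : Matrix (Fin n) (Fin n) K)).det
      = (-1) ^ n * (Matrix.charpoly M).eval t := by
    rw [eval_charpoly_aux]
    have : Mᵀ - t • (1 : Matrix (Fin n) (Fin n) K)
        = (-(t • (1 : Matrix (Fin n) (Fin n) K) - M))ᵀ := by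
      simp [Matrix.transpose_smul, sub_eq_add_neg, add_comm]
    rw [this, Matrix.det_transpose, Matrix.det_neg, Fintype.card_fin]
  have h5 : (c • (1 : Matrix (Fin n) (Fin n) K) - t • M).det
      = (Mᵀ - t • 1).det * M.det := by
    refine mul_left_cancel₀ hGd ?_
    linear_combination hdetkey
  rw [lhs, h5, rhs]
  ring
end

section
/- Let n ≥ 1, let M, G be n × n real matrices, and let c be a positive real number. Assume G is invertible (IsUnit G.det), G is alternating (Gᵀ = -G), Mᵀ * G * M = c • G, and every complex root z of the characteristic polynomial of M (i.e., every root of (Matrix.charpoly M).map (algebraMap ℝ ℂ)) satisfies Complex.abs z = Real.sqrt c. Then n is even, and the root multiplicities of Real.sqrt c and of -Real.sqrt c in Matrix.charpoly M are both even (possibly zero). -/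
open Matrix Polynomial Module

lemma aux_even_of_alt {k : ℕ} (A : Matrix (Fin k) (Fin k) ℝ) (hAalt : Aᵀ = -A)
    (hA : IsUnit A.det) : Even k := by
  have h1 : A.det = (-1 : ℝ) ^ k * A.det := by
    conv_lhs => rw [← Matrix.det_transpose, hAalt]
    rw [Matrix.det_neg, Fintype.card_fin]
  have hd : A.det ≠ 0 := hA.ne_zero
  by_contra hodd
  rw [Nat.not_even_iff_odd] at hodd
  rw [hodd.neg_one_pow, neg_one_mul] at h1
  exact hd (by linarith)

lemma aux_eval_charpoly {m : ℕ} (A : Matrix (Fin m) (Fin m) ℝ) (x : ℝ) :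
    (Matrix.charpoly A).eval x = (x • (1 : Matrix (Fin m) (Fin m) ℝ) - A).det := by
  have h0 : (Matrix.charpoly A).eval x = (Polynomial.evalRingHom x) (Matrix.charpoly A) := rfl
  rw [h0, Matrix.charpoly, RingHom.map_det]
  congr 1
  ext i j
  by_cases hij : i = j
  · subst hij
    simp [Matrix.charmatrix_apply_eq]
  · simp [Matrix.charmatrix_apply_ne _ _ _ hij, Matrix.one_apply_ne hij]

lemma aux_charpoly_comp_shift {m : ℕ} (A : Matrix (Fin m) (Fin m) ℝ) (s : ℝ) :
    (Matrix.charpoly A).comp (X + C s) = Matrix.charpoly (A - s • 1) := by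
  apply Polynomial.funext
  intro x
  rw [eval_comp]
  simp only [eval_add, eval_X, eval_C]
  rw [aux_eval_charpoly, aux_eval_charpoly]
  congr 1
  rw [add_smul]
  abel


lemma aux_even_rootMultiplicity {n : ℕ} (M G : Matrix (Fin n) (Fin n) ℝ) (c s : ℝ)
    (hs : s * s = c) (hs0 : s ≠ 0)
    (hG : IsUnit G.det) (hGalt : Gᵀ = -G) (h : Mᵀ * G * M = c • G) :
    Even ((Matrix.charpoly M).rootMultiplicity s) := by
  classical
  have hGdet : G.det ≠ 0 := hG.ne_zero
  have hc0 : c ≠ 0 := by rw [← hs]; exact mul_ne_zero hs0 hs0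
  -- M is invertible
  have hMdet : M.det ≠ 0 := by
    have hd := congrArg Matrix.det h
    rw [Matrix.det_mul, Matrix.det_mul, Matrix.det_transpose, Matrix.det_smul,
      Fintype.card_fin] at hd
    intro h0
    rw [h0, zero_mul, zero_mul] at hd
    exact (mul_ne_zero (pow_ne_zero n hc0) hGdet) hd.symm
  have hM : IsUnit M.det := isUnit_iff_ne_zero.mpr hMdet
  have hMT : IsUnit (Mᵀ).det := by rwa [Matrix.det_transpose]
  set N : Matrix (Fin n) (Fin n) ℝ := M - s • 1 with hN
  set P : Matrix (Fin n) (Fin n) ℝ := M⁻¹ * N with hP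
  have hMN : M * N = N * M := by
    simp only [hN, Matrix.mul_sub, Matrix.sub_mul, Matrix.mul_smul, Matrix.smul_mul,
      Matrix.mul_one, Matrix.one_mul]
  have hcomm : M⁻¹ * N = N * M⁻¹ := by
    calc M⁻¹ * N = M⁻¹ * N * (M * M⁻¹) := by rw [Matrix.mul_nonsing_inv M hM, Matrix.mul_one]
      _ = M⁻¹ * (N * M) * M⁻¹ := by simp only [Matrix.mul_assoc]
      _ = M⁻¹ * (M * N) * M⁻¹ := by rw [hMN]
      _ = M⁻¹ * M * N * M⁻¹ := by simp only [Matrix.mul_assoc]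
      _ = N * M⁻¹ := by rw [Matrix.nonsing_inv_mul M hM, Matrix.one_mul]
  have hstar : Mᵀ * G * N = (-s) • (Nᵀ * G) := by
    have e1 : Mᵀ * G * N = Mᵀ * G * M - s • (Mᵀ * G) := by
      simp only [hN, Matrix.mul_sub, Matrix.mul_smul, Matrix.mul_one]
    have e2 : Nᵀ * G = Mᵀ * G - s • G := by
      simp only [hN, Matrix.transpose_sub, Matrix.transpose_smul, Matrix.transpose_one,
        Matrix.sub_mul, Matrix.smul_mul, Matrix.one_mul]
    rw [e1, h, e2, ← hs]
    module
  have hGN : G * N = (-s) • (Pᵀ * G) := by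
    have hPT : Pᵀ = (Mᵀ)⁻¹ * Nᵀ := by
      rw [hP, hcomm, Matrix.transpose_mul, Matrix.transpose_nonsing_inv]
    calc G * N = ((Mᵀ)⁻¹ * Mᵀ) * (G * N) := by
          rw [Matrix.nonsing_inv_mul _ hMT, Matrix.one_mul]
      _ = (Mᵀ)⁻¹ * (Mᵀ * G * N) := by simp only [Matrix.mul_assoc]
      _ = (Mᵀ)⁻¹ * ((-s) • (Nᵀ * G)) := by rw [hstar]
      _ = (-s) • (Pᵀ * G) := by rw [Matrix.mul_smul, hPT, Matrix.mul_assoc]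
  have hstep : ∀ u v : Fin n → ℝ, u ⬝ᵥ G *ᵥ (N *ᵥ v) = (-s) * ((P *ᵥ u) ⬝ᵥ G *ᵥ v) := by
    intro u v
    have r : (P *ᵥ u) ⬝ᵥ (G *ᵥ v) = u ⬝ᵥ ((Pᵀ * G) *ᵥ v) := by
      rw [Matrix.dotProduct_mulVec u, ← Matrix.vecMul_vecMul, Matrix.vecMul_transpose,
        Matrix.dotProduct_mulVec]
    rw [Matrix.mulVec_mulVec, hGN, r, Matrix.smul_mulVec, dotProduct_smul,
      smul_eq_mul]
  have hiter : ∀ (k : ℕ) (u v : Fin n → ℝ),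
      u ⬝ᵥ G *ᵥ ((N ^ k) *ᵥ v) = (-s) ^ k * (((P ^ k) *ᵥ u) ⬝ᵥ G *ᵥ v) := by
    intro k
    induction k with
    | zero => intro u v; simp [Matrix.one_mulVec]
    | succ k ih =>
      intro u v
      have e : (N ^ (k + 1)) *ᵥ v = (N ^ k) *ᵥ (N *ᵥ v) := by
        rw [Matrix.mulVec_mulVec, ← pow_succ]
      rw [e, ih, hstep, Matrix.mulVec_mulVec, ← pow_succ']
      ring
  have hpow : ∀ (k : ℕ) (v : Fin n → ℝ), ((Matrix.toLin' N) ^ k) v = (N ^ k) *ᵥ v := by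
    intro k
    induction k with
    | zero => intro v; simp
    | succ k ih =>
      intro v
      rw [pow_succ', Module.End.mul_apply, ih, Matrix.toLin'_apply, Matrix.mulVec_mulVec,
        ← pow_succ']
  have hfk : ∀ k : ℕ, (Matrix.toLin' N) ^ k = Matrix.toLin' (N ^ k) := by
    intro k; apply LinearMap.ext; intro v; rw [hpow, Matrix.toLin'_apply]
  set K := LinearMap.ker (Matrix.toLin' (N ^ n)) with hK
  set W := LinearMap.range (Matrix.toLin' (N ^ n)) with hW
  have hKmem : ∀ x, x ∈ K ↔ (N ^ n) *ᵥ x = 0 := by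
    intro x; rw [hK, LinearMap.mem_ker, Matrix.toLin'_apply]
  have hchar : (Matrix.charpoly M).rootMultiplicity s = finrank ℝ K := by
    have hmax : Module.End.maxGenEigenspace (Matrix.toLin' N) 0 = K := by
      apply le_antisymm
      · intro x hx
        rw [Module.End.mem_maxGenEigenspace] at hx
        obtain ⟨k, hk⟩ := hx
        simp only [zero_smul, sub_zero] at hk
        have hxk : x ∈ LinearMap.ker ((Matrix.toLin' N) ^ k) := hk
        have h2 := Module.End.ker_pow_le_ker_pow_finrank (Matrix.toLin' N) k
        rw [Module.finrank_fin_fun, hfk n] at h2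
        exact h2 hxk
      · intro x hx
        rw [Module.End.mem_maxGenEigenspace]
        refine ⟨n, ?_⟩
        simp only [zero_smul, sub_zero]
        rw [hfk n]
        exact hx
    have h1 : Matrix.charpoly N = LinearMap.charpoly (Matrix.toLin' N) := by
      conv_lhs => rw [← LinearMap.toMatrix'_toLin' N]
      rw [← LinearMap.toMatrix_eq_toMatrix', LinearMap.charpoly_toMatrix]
    rw [Polynomial.rootMultiplicity_eq_natTrailingDegree, aux_charpoly_comp_shift, ← hN, h1,
      ← LinearMap.finrank_maxGenEigenspace_zero_eq, hmax]
  have hKW_orth : ∀ u ∈ K, ∀ w ∈ W, u ⬝ᵥ G *ᵥ w = 0 := by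
    intro u hu w hw
    obtain ⟨z, rfl⟩ := hw
    rw [Matrix.toLin'_apply, hiter n]
    have hu' : (N ^ n) *ᵥ u = 0 := (hKmem u).mp hu
    have hPn : (P ^ n) *ᵥ u = 0 := by
      rw [hP, Commute.mul_pow hcomm, ← Matrix.mulVec_mulVec, hu', Matrix.mulVec_zero]
    rw [hPn, zero_dotProduct, mul_zero]
  have hskew : ∀ u v : Fin n → ℝ, v ⬝ᵥ G *ᵥ u = -(u ⬝ᵥ G *ᵥ v) := by
    intro u v
    rw [Matrix.dotProduct_mulVec]
    have e : v ᵥ* G = -(G *ᵥ v) := by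
      rw [← Matrix.mulVec_transpose, hGalt, Matrix.neg_mulVec]
    rw [e, neg_dotProduct, dotProduct_comm]
  have hnd : ∀ u : Fin n → ℝ, (∀ v, u ⬝ᵥ G *ᵥ v = 0) → u = 0 := by
    intro u hu
    have h1 : u ᵥ* G = 0 := by
      funext i
      have h2 := hu (Pi.single i 1)
      rw [Matrix.dotProduct_mulVec, dotProduct_single, mul_one] at h2
      exact h2
    have h3 := congrArg (fun w => w ᵥ* G⁻¹) h1
    simpa [Matrix.vecMul_vecMul, Matrix.mul_nonsing_inv G hG] using h3
  have hdisj : Disjoint K W := by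
    rw [Submodule.disjoint_def]
    intro x hxK hxW
    obtain ⟨y, rfl⟩ := hxW
    have h1 : y ∈ LinearMap.ker ((Matrix.toLin' N) ^ (n + n)) := by
      rw [LinearMap.mem_ker, pow_add, hfk n, Module.End.mul_apply]
      exact LinearMap.mem_ker.mp hxK
    have h2 := Module.End.ker_pow_le_ker_pow_finrank (Matrix.toLin' N) (n + n)
    rw [Module.finrank_fin_fun, hfk n] at h2
    exact LinearMap.mem_ker.mp (h2 h1)
  have hsup : K ⊔ W = ⊤ := by
    apply Submodule.eq_top_of_disjoint _ _ _ hdisj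
    rw [add_comm]
    exact (LinearMap.finrank_range_add_finrank_ker (Matrix.toLin' (N ^ n))).ge
  have hBtot : ∀ u ∈ K, (∀ v ∈ K, u ⬝ᵥ G *ᵥ v = 0) → u = 0 := by
    intro u huK hKzero
    apply hnd
    intro v
    have hv : v ∈ K ⊔ W := by rw [hsup]; exact Submodule.mem_top
    obtain ⟨a, haK, b2, hbW, rfl⟩ := Submodule.mem_sup.mp hv
    rw [Matrix.mulVec_add, dotProduct_add, hKzero a haK, hKW_orth u huK b2 hbW, add_zero]
  let b := Module.finBasis ℝ K
  set A : Matrix (Fin (finrank ℝ K)) (Fin (finrank ℝ K)) ℝ :=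
    Matrix.of fun i j => ((b i : Fin n → ℝ)) ⬝ᵥ G *ᵥ ((b j : Fin n → ℝ)) with hA
  have hsum : ∀ (x : Fin (finrank ℝ K) → ℝ) (w : Fin n → ℝ),
      (∑ j, x j • ((b j : Fin n → ℝ))) ⬝ᵥ w = ∑ j, x j * (((b j : Fin n → ℝ)) ⬝ᵥ w) := by
    intro x w
    simp only [dotProduct, Finset.sum_apply, Pi.smul_apply, smul_eq_mul, Finset.sum_mul,
      Finset.mul_sum]
    rw [Finset.sum_comm]
    exact Finset.sum_congr rfl fun i _ => Finset.sum_congr rfl fun j _ => by ring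
  have hAalt : Aᵀ = -A := by
    ext i j
    simp only [Matrix.transpose_apply, Matrix.neg_apply, hA, Matrix.of_apply]
    exact hskew _ _
  have hAinj : ∀ x, A *ᵥ x = 0 → x = 0 := by
    intro x hx
    set v : Fin n → ℝ := ∑ j, x j • ((b j : Fin n → ℝ)) with hv
    have hvK : v ∈ K := Submodule.sum_mem _ fun j _ => Submodule.smul_mem _ _ (b j).2
    have hBiv : ∀ i, ((b i : Fin n → ℝ)) ⬝ᵥ G *ᵥ v = 0 := by
      intro i
      have h1 : v ⬝ᵥ G *ᵥ ((b i : Fin n → ℝ))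
          = ∑ j, x j * (((b j : Fin n → ℝ)) ⬝ᵥ G *ᵥ ((b i : Fin n → ℝ))) := hsum x _
      have h2 : ∑ j, x j * (((b j : Fin n → ℝ)) ⬝ᵥ G *ᵥ ((b i : Fin n → ℝ)))
          = -∑ j, A i j * x j := by
        rw [← Finset.sum_neg_distrib]
        refine Finset.sum_congr rfl fun j _ => ?_
        rw [hskew ((b i : Fin n → ℝ)) ((b j : Fin n → ℝ))]
        simp only [hA, Matrix.of_apply]
        ring
      have h3 : ∑ j, A i j * x j = 0 := by
        have h4 := congrFun hx i
        simpa [Matrix.mulVec, dotProduct] using h4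
      have h5 : v ⬝ᵥ G *ᵥ ((b i : Fin n → ℝ)) = 0 := by rw [h1, h2, h3, neg_zero]
      rw [hskew v ((b i : Fin n → ℝ)), h5, neg_zero]
    have hKv : ∀ w ∈ K, w ⬝ᵥ G *ᵥ v = 0 := by
      intro w hw
      have hrepr : (∑ i, (b.repr ⟨w, hw⟩) i • ((b i : Fin n → ℝ))) = w := by
        have h6 := b.sum_repr ⟨w, hw⟩
        calc (∑ i, (b.repr ⟨w, hw⟩) i • ((b i : Fin n → ℝ)))
            = ((∑ i, (b.repr ⟨w, hw⟩) i • b i : K) : Fin n → ℝ) := by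
              rw [AddSubmonoidClass.coe_finset_sum]
              exact Finset.sum_congr rfl fun i _ => rfl
          _ = w := by rw [h6]
      rw [← hrepr, hsum]
      exact Finset.sum_eq_zero fun i _ => by rw [hBiv, mul_zero]
    have hv0 : v = 0 := by
      apply hBtot v hvK
      intro w hw
      rw [hskew w v, hKv w hw, neg_zero]
    have h7 : (∑ j, x j • b j) = (0 : K) := by
      apply Subtype.ext
      rw [AddSubmonoidClass.coe_finset_sum]
      have h9 : ∑ j, ((x j • b j : K) : Fin n → ℝ) = v := by
        rw [hv]
        exact Finset.sum_congr rfl fun j _ => rfl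
      rw [h9, hv0]
      rfl
    funext j
    exact Fintype.linearIndependent_iff.mp b.linearIndependent x h7 j
  have hAunit : IsUnit A.det := by
    have hinj : Function.Injective A.mulVec := by
      intro x y hxy
      have h8 := hAinj (x - y) (by rw [Matrix.mulVec_sub, hxy, sub_self])
      exact sub_eq_zero.mp h8
    exact (Matrix.isUnit_iff_isUnit_det A).mp (Matrix.mulVec_injective_iff_isUnit.mp hinj)
  rw [hchar]
  exact aux_even_of_alt A hAalt hAunit

/-- A real matrix `M` preserving a nondegenerate alternating form up to a positive
factor `c`, all of whose complex eigenvalues have modulus `√c`, has even size and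
the real eigenvalues `±√c` occur with even algebraic multiplicity. -/
theorem even_multiplicity_of_symplectic_eigenvalues {n : ℕ} (hn : 1 ≤ n)
    (M G : Matrix (Fin n) (Fin n) ℝ) (c : ℝ) (hc : 0 < c)
    (hG : IsUnit G.det) (hGalt : Gᵀ = -G) (h : Mᵀ * G * M = c • G)
    (hroots : ∀ z : ℂ, ((Matrix.charpoly M).map (algebraMap ℝ ℂ)).IsRoot z →
      ‖z‖ = Real.sqrt c) :
    Even n ∧ Even ((Matrix.charpoly M).rootMultiplicity (Real.sqrt c)) ∧
      Even ((Matrix.charpoly M).rootMultiplicity (-Real.sqrt c)) := by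
  have hs1 : Real.sqrt c * Real.sqrt c = c := Real.mul_self_sqrt hc.le
  have hs0 : Real.sqrt c ≠ 0 := ne_of_gt (Real.sqrt_pos.mpr hc)
  refine ⟨aux_even_of_alt G hGalt hG,
    aux_even_rootMultiplicity M G c _ hs1 hs0 hG hGalt h,
    aux_even_rootMultiplicity M G c _ (by rw [neg_mul_neg]; exact hs1)
      (neg_ne_zero.mpr hs0) hG hGalt h⟩
end

section
/- Let P be a monic polynomial with real coefficients such that its natural degree is even, its constant coefficient P.coeff 0 equals 1, and every complex root z of P (i.e., every root of P.map (algebraMap ℝ ℂ)) satisfies Complex.abs z = 1. Then the root multiplicity of 1 in P and the root multiplicity of -1 in P are both even (possibly zero). -/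
open Polynomial Filter Topology Set

lemma even_rootMultiplicity_of_eventually_pos (P : Polynomial ℝ) (a : ℝ)
    (hpos : ∀ᶠ x in 𝓝[≠] a, 0 < P.eval x) : Even (P.rootMultiplicity a) := by
  have hP : P ≠ 0 := by
    rintro rfl
    obtain ⟨x, hx⟩ := hpos.exists
    simp at hx
  set m := P.rootMultiplicity a with hm
  set g := P /ₘ (X - C a) ^ m with hgdef
  have hfact : ∀ x : ℝ, P.eval x = (x - a) ^ m * g.eval x := by
    intro x
    conv_lhs => rw [← P.pow_mul_divByMonic_rootMultiplicity_eq a]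
    simp [← hm, ← hgdef]
  have hga : g.eval a ≠ 0 := eval_divByMonic_pow_rootMultiplicity_ne_zero a hP
  have hcont : ContinuousAt (fun x => g.eval x * g.eval a) a := by fun_prop
  have hsq : (0 : ℝ) < g.eval a * g.eval a := mul_self_pos.mpr hga
  have hev : ∀ᶠ x in 𝓝 a, 0 < g.eval x * g.eval a :=
    hcont.eventually (eventually_gt_nhds hsq)
  have E : ∀ᶠ x in 𝓝[≠] a, 0 < P.eval x ∧ 0 < g.eval x * g.eval a :=
    hpos.and (hev.filter_mono nhdsWithin_le_nhds)
  have hgtle : 𝓝[>] a ≤ 𝓝[≠] a := nhdsWithin_mono a fun x hx => ne_of_gt hx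
  have hltle : 𝓝[<] a ≤ 𝓝[≠] a := nhdsWithin_mono a fun x hx => ne_of_lt hx
  obtain ⟨x, hxa, hxP, hxg⟩ :
      ∃ x, a < x ∧ 0 < P.eval x ∧ 0 < g.eval x * g.eval a := by
    obtain ⟨x, h1, h2, h3⟩ :=
      (eventually_mem_nhdsWithin.and (E.filter_mono hgtle)).exists
    exact ⟨x, h1, h2, h3⟩
  have hgapos : 0 < g.eval a := by
    have hpow : 0 < (x - a) ^ m := pow_pos (by linarith) m
    rw [hfact x] at hxP
    nlinarith
  rcases Nat.even_or_odd m with he | ho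
  · exact he
  exfalso
  obtain ⟨y, hya, hyP, hyg⟩ :
      ∃ y, y < a ∧ 0 < P.eval y ∧ 0 < g.eval y * g.eval a := by
    obtain ⟨y, h1, h2, h3⟩ :=
      (eventually_mem_nhdsWithin.and (E.filter_mono hltle)).exists
    exact ⟨y, h1, h2, h3⟩
  have hpow : (y - a) ^ m < 0 := ho.pow_neg (by linarith)
  rw [hfact y] at hyP
  nlinarith

/-- A monic real polynomial of even degree, with constant coefficient `1`, all of
whose complex roots lie on the unit circle, has even root multiplicity at both `1`
and `-1`. -/
theorem even_rootMultiplicity_of_unit_circle_roots (P : Polynomial ℝ)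
    (hmonic : P.Monic) (hdeg : Even P.natDegree) (hconst : P.coeff 0 = 1)
    (hroots : ∀ z : ℂ, (P.map (algebraMap ℝ ℂ)).IsRoot z → ‖z‖ = 1) :
    Even (P.rootMultiplicity 1) ∧ Even (P.rootMultiplicity (-1)) := by
  by_cases hn : P.natDegree = 0
  · have hP1 : P = 1 := hmonic.natDegree_eq_zero.mp hn
    subst hP1
    constructor <;>
      · rw [rootMultiplicity_eq_zero (by simp [IsRoot])]
        exact Even.zero
  -- P real roots are among {1, -1}
  have hne : ∀ x : ℝ, P.eval x = 0 → x = 1 ∨ x = -1 := by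
    intro x hx
    have hroot : (P.map (algebraMap ℝ ℂ)).IsRoot (x : ℂ) := by
      rw [IsRoot, eval_map, show ((x : ℂ)) = algebraMap ℝ ℂ x from rfl,
        eval₂_at_apply, hx, map_zero]
    have habs := hroots _ hroot
    rw [Complex.norm_real, Real.norm_eq_abs] at habs
    exact abs_eq (by norm_num : (0:ℝ) ≤ 1) |>.mp habs
  have hnz : ∀ y : ℝ, y ≠ 1 → y ≠ -1 → P.eval y ≠ 0 := by
    intro y h1 h2 hy
    rcases hne y hy with h | h
    exacts [h1 h, h2 h]
  have hdegpos : 0 < P.degree := by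
    rw [← natDegree_pos_iff_degree_pos]
    omega
  have h0 : (0:ℝ) < P.eval 0 := by
    rw [← coeff_zero_eq_eval_zero, hconst]; norm_num
  have key : ∀ u v : ℝ, u < v → P.eval u < 0 → 0 < P.eval v →
      ∃ c, u < c ∧ c < v ∧ P.eval c = 0 := by
    intro u v huv hu hv
    obtain ⟨c, hc, hc0⟩ := intermediate_value_Ioo huv.le
      (P.continuous_aeval.continuousOn) ⟨hu, hv⟩
    exact ⟨c, hc.1, hc.2, hc0⟩
  have key' : ∀ u v : ℝ, u < v → 0 < P.eval u → P.eval v < 0 →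
      ∃ c, u < c ∧ c < v ∧ P.eval c = 0 := by
    intro u v huv hu hv
    obtain ⟨c, hc, hc0⟩ := intermediate_value_Ioo' huv.le
      (P.continuous_aeval.continuousOn) ⟨hv, hu⟩
    exact ⟨c, hc.1, hc.2, hc0⟩
  have hT : Tendsto (fun x => P.eval x) atTop atTop :=
    P.tendsto_atTop_of_leadingCoeff_nonneg hdegpos (by simp [hmonic.leadingCoeff])
  have hQ : Tendsto (fun x => P.eval (-x)) atTop atTop := by
    have hQ1 : (P.comp (-X)).natDegree = P.natDegree := by
      simp [natDegree_comp]
    have hQdeg : 0 < (P.comp (-X)).degree := by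
      rw [← natDegree_pos_iff_degree_pos, hQ1]
      omega
    have hQlead : (P.comp (-X)).leadingCoeff = 1 := by
      rw [leadingCoeff_comp (by simp : (-X : Polynomial ℝ).natDegree ≠ 0)]
      simp [hmonic.leadingCoeff, hdeg.neg_one_pow]
    have := (P.comp (-X)).tendsto_atTop_of_leadingCoeff_nonneg hQdeg
      (by rw [hQlead]; norm_num)
    simpa [eval_comp] using this
  have hpos : ∀ x : ℝ, x ≠ 1 → x ≠ -1 → 0 < P.eval x := by
    intro x hx1 hxm1
    by_contra h
    push_neg at h
    have hlt : P.eval x < 0 := lt_of_le_of_ne h (hnz x hx1 hxm1)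
    rcases lt_trichotomy x 1 with hx | hx | hx
    · rcases lt_trichotomy x (-1) with hxm | hxm | hxm
      · -- x < -1
        obtain ⟨t, ht1, ht2⟩ := ((hQ.eventually_gt_atTop 0).and
          (eventually_gt_atTop (-x))).exists
        obtain ⟨c, hc1, hc2, hc0⟩ := key' (-t) x (by linarith) ht1 hlt
        exact hnz c (by linarith) (by linarith) hc0
      · exact hxm1 hxm
      · -- -1 < x < 1
        rcases lt_trichotomy x 0 with hx0 | hx0 | hx0
        · obtain ⟨c, hc1, hc2, hc0⟩ := key x 0 hx0 hlt h0
          exact hnz c (by linarith) (by linarith) hc0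
        · rw [hx0] at hlt; linarith
        · obtain ⟨c, hc1, hc2, hc0⟩ := key' 0 x hx0 h0 hlt
          exact hnz c (by linarith) (by linarith) hc0
    · exact hx1 hx
    · -- 1 < x
      obtain ⟨t, ht1, ht2⟩ := ((hT.eventually_gt_atTop 0).and
        (eventually_gt_atTop x)).exists
      obtain ⟨c, hc1, hc2, hc0⟩ := key x t ht2 hlt ht1
      exact hnz c (by linarith) (by linarith) hc0
  constructor
  · apply even_rootMultiplicity_of_eventually_pos
    have hgt : ∀ᶠ y in 𝓝[≠] (1:ℝ), (0:ℝ) < y :=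
      (eventually_gt_nhds (by norm_num : (0:ℝ) < 1)).filter_mono nhdsWithin_le_nhds
    filter_upwards [eventually_mem_nhdsWithin, hgt] with y hy1 hy2
    exact hpos y hy1 (by intro h; rw [h] at hy2; linarith)
  · apply even_rootMultiplicity_of_eventually_pos
    have hlt : ∀ᶠ y in 𝓝[≠] (-1:ℝ), y < 0 :=
      (eventually_lt_nhds (by norm_num : (-1:ℝ) < 0)).filter_mono nhdsWithin_le_nhds
    filter_upwards [eventually_mem_nhdsWithin, hlt] with y hy1 hy2
    exact hpos y (by intro h; rw [h] at hy2; linarith) hy1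
end

section
/- Fix n ≥ 1. For z : Fin n → ℝ and 1 ≤ k ≤ n, let S_k(z) denote the maximum over all subsets T of Fin n with |T| = k of ∑_{i ∈ T} z i. For x y : Fin n → ℝ, say x is majorized by y (written x ≺ y) if S_k(x) ≤ S_k(y) for every 1 ≤ k ≤ n and ∑_i x i = ∑_i y i. Let φ : (Fin n → ℝ) → ℝ be convex on all of ℝⁿ (ConvexOn ℝ Set.univ φ) and symmetric, i.e., φ (x ∘ σ) = φ x for every permutation σ of Fin n and every x. Then x ≺ y implies φ x ≤ φ y. -/
/-- The maximum, over all subsets `T` of a finite index type with `|T| = k`, of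
`∑ i ∈ T, z i`; this is the sum of the `k` largest components of `z`
(junk value `0` if no such subset exists). -/
noncomputable def maxSubsetSum {ι : Type*} [Fintype ι] (z : ι → ℝ) (k : ℕ) : ℝ :=
  if h : ((Finset.univ : Finset ι).powersetCard k).Nonempty then
    ((Finset.univ : Finset ι).powersetCard k).sup' h fun T => ∑ i ∈ T, z i
  else 0

/-- `x` is majorized by `y`: for every `1 ≤ k ≤ |ι|`, the maximum of `∑ i ∈ T, x i`
over subsets `T` of cardinality `k` is at most the corresponding maximum for `y`,
and the total sums agree. -/
def Majorizes {ι : Type*} [Fintype ι] (x y : ι → ℝ) : Prop :=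
  (∀ k : ℕ, 1 ≤ k → k ≤ Fintype.card ι → maxSubsetSum x k ≤ maxSubsetSum y k) ∧
    ∑ i, x i = ∑ i, y i

open Finset

namespace SchurAux

variable {n : ℕ}

lemma le_val_of_strictMono {k : ℕ} (f : Fin k → Fin n) (hf : StrictMono f) :
    ∀ m (h : m < k), m ≤ (f ⟨m, h⟩ : ℕ) := by
  intro m
  induction m with
  | zero => simp
  | succ i ih =>
    intro h
    have h1 : (f ⟨i, Nat.lt_of_succ_lt h⟩ : ℕ) < (f ⟨i + 1, h⟩ : ℕ) := by
      exact_mod_cast hf (by simp [Fin.lt_def])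
    exact Nat.succ_le_of_lt (lt_of_le_of_lt (ih _) h1)

/-- Any `k`-subset sum of an antitone tuple is at most the sum of the first `k` entries. -/
lemma sum_subset_le_sum_firstk {w : Fin n → ℝ} (hw : Antitone w) {k : ℕ} (hk : k ≤ n)
    {S : Finset (Fin n)} (hS : S.card = k) :
    ∑ i ∈ S, w i ≤ ∑ j : Fin k, w (Fin.castLE hk j) := by
  classical
  have e := S.orderIsoOfFin hS
  have h1 : ∑ i ∈ S, w i = ∑ j : Fin k, w (e j) := by
    rw [← Finset.sum_coe_sort S w]
    exact (Equiv.sum_comp e.toEquiv (fun s : S => w s)).symm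
  rw [h1]
  apply Finset.sum_le_sum
  intro j _
  apply hw
  have : (j : ℕ) ≤ ((e j : Fin n) : ℕ) := by
    have hsm : StrictMono (fun j : Fin k => (e j : Fin n)) := fun a b hab => e.strictMono hab
    simpa using le_val_of_strictMono _ hsm j j.2
  exact this

/-- Permutation putting `z` into decreasing order. -/
noncomputable def dperm (z : Fin n → ℝ) : Equiv.Perm (Fin n) :=
  Fin.revPerm.trans (Tuple.sort z)

lemma antitone_dsort (z : Fin n → ℝ) : Antitone (z ∘ dperm z) := by
  intro i j hij
  exact Tuple.monotone_sort z (by simpa using Fin.rev_le_rev.2 hij)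

lemma maxSubsetSum_eq (z : Fin n → ℝ) {k : ℕ} (hk : k ≤ n) :
    maxSubsetSum z k = ∑ j : Fin k, (z ∘ dperm z) (Fin.castLE hk j) := by
  classical
  have hne : ((Finset.univ : Finset (Fin n)).powersetCard k).Nonempty :=
    Finset.powersetCard_nonempty.2 (by simpa using hk)
  rw [maxSubsetSum, dif_pos hne]
  apply le_antisymm
  · apply Finset.sup'_le
    intro T hT
    have hTcard : T.card = k := (Finset.mem_powersetCard_univ).1 hT
    have himg : (T.image (dperm z).symm).card = k := by
      rw [Finset.card_image_of_injective _ (dperm z).symm.injective, hTcard]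
    have hsum : ∑ i ∈ T, z i = ∑ i ∈ T.image (dperm z).symm, (z ∘ dperm z) i := by
      rw [Finset.sum_image (fun a _ b _ h => (dperm z).symm.injective h)]
      simp
    rw [hsum]
    exact sum_subset_le_sum_firstk (antitone_dsort z) hk himg
  · set T : Finset (Fin n) :=
      (Finset.univ : Finset (Fin k)).map
        ⟨fun j => dperm z (Fin.castLE hk j),
         fun a b h => by
           have := (dperm z).injective h
           exact Fin.castLE_injective hk this⟩ with hT
    have hTmem : T ∈ (Finset.univ : Finset (Fin n)).powersetCard k := by
      rw [Finset.mem_powersetCard_univ, hT, Finset.card_map, Finset.card_univ, Fintype.card_fin]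
    refine Finset.le_sup'_of_le _ hTmem ?_
    rw [hT, Finset.sum_map]
    simp
    exact le_rfl

lemma abel_compare (a g h : ℕ → ℝ)
    (ha : ∀ i, i + 1 < n → a (i + 1) ≤ a i)
    (hk : ∀ k, 1 ≤ k → k ≤ n → ∑ j ∈ range k, g j ≤ ∑ j ∈ range k, h j)
    (htot : ∑ j ∈ range n, g j = ∑ j ∈ range n, h j) :
    ∑ j ∈ range n, a j * g j ≤ ∑ j ∈ range n, a j * h j := by
  have hg := Finset.sum_range_by_parts a g n
  have hh := Finset.sum_range_by_parts a h n
  simp only [smul_eq_mul] at hg hh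
  rw [hg, hh, htot]
  apply sub_le_sub_left
  apply Finset.sum_le_sum
  intro i hi
  have hi' : i + 1 < n := by
    have := Finset.mem_range.1 hi
    omega
  exact mul_le_mul_of_nonpos_left (hk (i + 1) (by omega) hi'.le)
    (sub_nonpos.2 (ha i hi'))

/-- padded version of a tuple -/
noncomputable def pad (w : Fin n → ℝ) (j : ℕ) : ℝ := if h : j < n then w ⟨j, h⟩ else 0

lemma sum_range_pad (w : Fin n → ℝ) {k : ℕ} (hk : k ≤ n) :
    ∑ j ∈ range k, pad w j = ∑ j : Fin k, w (Fin.castLE hk j) := by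
  rw [← Fin.sum_univ_eq_sum_range (fun j => pad w j) k]
  apply Finset.sum_congr rfl
  intro j _
  rw [pad, dif_pos (lt_of_lt_of_le j.2 hk)]
  rfl

lemma sum_range_pad_total (w : Fin n → ℝ) :
    ∑ j ∈ range n, pad w j = ∑ i, w i := by
  rw [sum_range_pad w le_rfl]
  exact Fintype.sum_congr _ _ fun j => by simp

/-- The key inequality: if `x ≺ y` then every linear functional evaluated at `x` is at most
its value at some permutation of `y`. -/
lemma key (x y : Fin n → ℝ) (hmaj : Majorizes x y) (c : Fin n → ℝ) :
    ∃ σ : Equiv.Perm (Fin n), ∑ i, c i * x i ≤ ∑ i, c i * y (σ i) := by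
  classical
  set cd := c ∘ dperm c with hcd
  set xd := x ∘ dperm x with hxd
  set yd := y ∘ dperm y with hyd
  refine ⟨(dperm c).symm.trans (dperm y), ?_⟩
  -- Step 1: reduce LHS to sorted inner product
  have step1 : ∑ i, c i * x i ≤ ∑ i, cd i * xd i := by
    have h1 : ∑ i, c i * x i =
        ∑ j, cd j * xd (((dperm c).trans (dperm x).symm) j) := by
      rw [← Equiv.sum_comp (dperm c) (fun i => c i * x i)]
      apply Fintype.sum_congr
      intro j
      simp [hcd, hxd]
    rw [h1]
    have hmono : Monovary cd xd :=
      (antitone_dsort c).monovary (antitone_dsort x)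
    simpa only [smul_eq_mul] using
      hmono.sum_smul_comp_perm_le_sum_smul (σ := (dperm c).trans (dperm x).symm)
  -- Step 2: sorted comparison via Abel summation
  have step2 : ∑ i, cd i * xd i ≤ ∑ i, cd i * yd i := by
    have hx' : ∑ i, cd i * xd i = ∑ j ∈ range n, pad cd j * pad xd j := by
      rw [← Fin.sum_univ_eq_sum_range (fun j => pad cd j * pad xd j) n]
      apply Fintype.sum_congr
      intro j
      simp [pad, j.2]
    have hy' : ∑ i, cd i * yd i = ∑ j ∈ range n, pad cd j * pad yd j := by
      rw [← Fin.sum_univ_eq_sum_range (fun j => pad cd j * pad yd j) n]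
      apply Fintype.sum_congr
      intro j
      simp [pad, j.2]
    rw [hx', hy']
    apply abel_compare
    · intro i hi
      rw [pad, pad, dif_pos hi, dif_pos (Nat.lt_of_succ_lt hi)]
      exact antitone_dsort c (by simp [Fin.le_def])
    · intro k hk1 hkn
      rw [sum_range_pad _ hkn, sum_range_pad _ hkn]
      have h1 := (maxSubsetSum_eq x hkn).symm
      have h2 := maxSubsetSum_eq y hkn
      calc ∑ j : Fin k, xd (Fin.castLE hkn j) = maxSubsetSum x k := h1
        _ ≤ maxSubsetSum y k := hmaj.1 k hk1 (by simpa using hkn)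
        _ = ∑ j : Fin k, yd (Fin.castLE hkn j) := h2
    · rw [sum_range_pad_total, sum_range_pad_total]
      calc ∑ i, xd i = ∑ i, x i := Equiv.sum_comp (dperm x) x
        _ = ∑ i, y i := hmaj.2
        _ = ∑ i, yd i := (Equiv.sum_comp (dperm y) y).symm
  -- Step 3: rewrite RHS
  have step3 : ∑ i, cd i * yd i =
      ∑ i, c i * y (((dperm c).symm.trans (dperm y)) i) := by
    rw [← Equiv.sum_comp (dperm c)
      (fun i => c i * y (((dperm c).symm.trans (dperm y)) i))]
    apply Fintype.sum_congr
    intro j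
    simp [hcd, hyd]
  exact le_of_le_of_eq (step1.trans step2) step3

end SchurAux

/-- Schur's theorem: a symmetric convex function on `ℝⁿ` is Schur-convex. -/
theorem schur_convex_of_symmetric_convex {n : ℕ} (hn : 1 ≤ n)
    (φ : (Fin n → ℝ) → ℝ) (hconv : ConvexOn ℝ Set.univ φ)
    (hsymm : ∀ (σ : Equiv.Perm (Fin n)) (x : Fin n → ℝ), φ (x ∘ σ) = φ x)
    (x y : Fin n → ℝ) (hmaj : Majorizes x y) : φ x ≤ φ y := by
  classical
  set s : Set (Fin n → ℝ) := Set.range (fun σ : Equiv.Perm (Fin n) => y ∘ σ) with hs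
  have hsfin : s.Finite := Set.finite_range _
  have hxmem : x ∈ convexHull ℝ s := by
    by_contra hx
    obtain ⟨f, u, hfu, hux⟩ :=
      geometric_hahn_banach_closed_point (convex_convexHull ℝ s)
        (hsfin.isCompact_convexHull (𝕜 := ℝ)).isClosed hx
    set c : Fin n → ℝ := fun i => f (fun j => if i = j then (1 : ℝ) else 0) with hc
    have hf : ∀ a : Fin n → ℝ, f a = ∑ i, a i * c i := by
      intro a
      conv_lhs => rw [pi_eq_sum_univ a, map_sum]
      apply Fintype.sum_congr
      intro i
      rw [map_smul, smul_eq_mul, hc]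
    obtain ⟨σ, hσ⟩ := SchurAux.key x y hmaj c
    have h1 : f x ≤ f (y ∘ σ) := by
      rw [hf, hf]
      simpa only [mul_comm, Function.comp_apply] using hσ
    have h2 : y ∘ σ ∈ convexHull ℝ s := subset_convexHull ℝ s ⟨σ, rfl⟩
    exact absurd (h1.trans_lt (hfu _ h2)) (not_lt.2 hux.le)
  obtain ⟨z, hzs, hz⟩ :=
    hconv.exists_ge_of_mem_convexHull (Set.subset_univ s) hxmem
  obtain ⟨σ, rfl⟩ := hzs
  exact hz.trans_eq (hsymm σ y)
end

section
/- Fix n ≥ 1 and 1 ≤ k ≤ n. For x : Fin n → ℝ, define c_k(x) : {S // S ∈ (Finset.univ : Finset (Fin n)).powersetCard k} → ℝ by c_k(x)(S) = ∑_{i ∈ S} x i. For a finite index type ι and z w : ι → ℝ, say z is majorized by w (written z ≺ w) if for every 1 ≤ l ≤ |ι| the maximum over all subsets T of ι with |T| = l of ∑_{j ∈ T} z j is at most the corresponding maximum for w, and ∑_j z j = ∑_j w j. Then for x y : Fin n → ℝ with x ≺ y (majorization on Fin n), one has c_k(x) ≺ c_k(y) (majorization on the type of k-element subsets of Fin n).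 -/
/-- The `k`-th compound vector of `x`: the family of all sums of `k` distinct
components of `x`, indexed by the `k`-element subsets of `Fin n`. -/
noncomputable def compoundVector {n : ℕ} (k : ℕ) (x : Fin n → ℝ) :
    {S // S ∈ (Finset.univ : Finset (Fin n)).powersetCard k} → ℝ :=
  fun S => ∑ i ∈ S.1, x i

open Finset


/-- Abel summation inequality over `range n`. -/
lemma abel_nonpos (n : ℕ) (A g : ℕ → ℝ)
    (hA : ∀ i, i + 1 < n → A i ≤ A (i + 1))
    (hG : ∀ m, m ≤ n → 0 ≤ ∑ j ∈ range m, g j)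
    (hGn : ∑ j ∈ range n, g j = 0) :
    ∑ j ∈ range n, A j * g j ≤ 0 := by
  have h := Finset.sum_range_by_parts A g n
  simp only [smul_eq_mul] at h
  rw [h, hGn, mul_zero, zero_sub, neg_nonpos]
  apply Finset.sum_nonneg
  intro i hi
  rw [mem_range] at hi
  exact mul_nonneg (by linarith [hA i (by omega)]) (hG (i + 1) (by omega))

lemma sum_range_eq_sum_filter {M : Type*} [AddCommMonoid M] (n : ℕ) (f : Fin n → M) :
    ∀ m, m ≤ n → ∑ j ∈ range m, (if h : j < n then f ⟨j, h⟩ else 0)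
      = ∑ j ∈ univ.filter (fun j : Fin n => (j : ℕ) < m), f j := by
  intro m
  induction m with
  | zero => intro _; simp
  | succ m ih =>
    intro hm
    have hmn : m < n := hm
    rw [Finset.sum_range_succ, ih (by omega), dif_pos hmn]
    have : univ.filter (fun j : Fin n => (j : ℕ) < m + 1)
        = insert ⟨m, hmn⟩ (univ.filter (fun j : Fin n => (j : ℕ) < m)) := by
      ext j
      simp only [mem_filter, mem_univ, true_and, mem_insert, Fin.ext_iff]
      omega
    rw [this, Finset.sum_insert (by simp), add_comm]

/-- Abel summation inequality, `Fin` version. -/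
lemma abel_nonpos_fin (n : ℕ) (A g : Fin n → ℝ)
    (hA : Monotone A)
    (hG : ∀ m, m ≤ n → 0 ≤ ∑ j ∈ univ.filter (fun j : Fin n => (j : ℕ) < m), g j)
    (hGn : ∑ j, g j = 0) :
    ∑ j, A j * g j ≤ 0 := by
  have key := abel_nonpos n (fun j => if h : j < n then A ⟨j, h⟩ else 0)
    (fun j => if h : j < n then g ⟨j, h⟩ else 0) ?_ ?_ ?_
  · calc ∑ j, A j * g j
        = ∑ j ∈ range n, ((fun j => if h : j < n then A ⟨j, h⟩ else 0) j *
            (fun j => if h : j < n then g ⟨j, h⟩ else 0) j) := by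
          rw [Finset.sum_range]; apply Finset.sum_congr rfl; intro j _; simp [j.isLt]
      _ ≤ 0 := key
  · intro i hi
    simp only [dif_pos (by omega : i < n), dif_pos (by omega : i + 1 < n)]
    exact hA (by simp [Fin.le_def])
  · intro m hm
    rw [sum_range_eq_sum_filter n _ m hm]
    exact hG m hm
  · rw [sum_range_eq_sum_filter n _ n le_rfl, ← hGn]
    apply Finset.sum_congr
    · ext j; simp [j.isLt]
    · intros; rfl

lemma card_filter_coe (n : ℕ) (p : ℕ → Prop) [DecidablePred p] :
    (univ.filter fun j : Fin n => p (j : ℕ)).card = ((range n).filter p).card := by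
  rw [← Finset.card_image_of_injective _ Fin.val_injective]
  congr 1
  ext a
  simp only [mem_image, mem_filter, mem_univ, true_and, mem_range]
  constructor
  · rintro ⟨j, hp, rfl⟩; exact ⟨j.isLt, hp⟩
  · rintro ⟨ha, hp⟩; exact ⟨⟨a, ha⟩, hp, rfl⟩

lemma card_filter_ge (n a : ℕ) :
    (univ.filter fun j : Fin n => a ≤ (j : ℕ)).card = n - a := by
  rw [card_filter_coe]
  have : (range n).filter (fun j => a ≤ j) = Ico a n := by
    ext j; simp only [mem_filter, mem_range, mem_Ico]; omega
  rw [this, Nat.card_Ico]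

/-- The sum of the `l` largest entries of `z`. -/
noncomputable def topSum {n : ℕ} (z : Fin n → ℝ) (l : ℕ) : ℝ :=
  ∑ j ∈ univ.filter (fun j : Fin n => n - l ≤ (j : ℕ)), z (Tuple.sort z j)

lemma topSum_le_maxSubsetSum {n : ℕ} (z : Fin n → ℝ) (l : ℕ) (hl : l ≤ n) :
    topSum z l ≤ maxSubsetSum z l := by
  set π := Tuple.sort z
  set t := univ.filter (fun j : Fin n => n - l ≤ (j : ℕ)) with ht
  have htcard : t.card = l := by rw [ht, card_filter_ge]; omega
  set S := t.image π with hS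
  have hScard : S.card = l := by
    rw [hS, Finset.card_image_of_injective _ π.injective, htcard]
  have hSmem : S ∈ (univ : Finset (Fin n)).powersetCard l :=
    Finset.mem_powersetCard.mpr ⟨Finset.subset_univ _, hScard⟩
  have hne : ((univ : Finset (Fin n)).powersetCard l).Nonempty := ⟨S, hSmem⟩
  have hmax : maxSubsetSum z l = ((univ : Finset (Fin n)).powersetCard l).sup' hne
      (fun T => ∑ i ∈ T, z i) := dif_pos hne
  rw [hmax]
  have : topSum z l = ∑ i ∈ S, z i := by
    rw [topSum, hS, Finset.sum_image (fun a _ b _ h => π.injective h)]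
  rw [this]
  exact Finset.le_sup' (fun T => ∑ i ∈ T, z i) hSmem
lemma card_filter_sort_mem {n : ℕ} (π : Equiv.Perm (Fin n)) (S : Finset (Fin n)) :
    (univ.filter fun j : Fin n => π j ∈ S).card = S.card := by
  apply Finset.card_bij (fun j _ => π j)
  · intro j hj; exact (Finset.mem_filter.mp hj).2
  · intro a _ b _ h; exact π.injective h
  · intro i hi
    exact ⟨π.symm i, Finset.mem_filter.mpr ⟨mem_univ _, by simpa using hi⟩, by simp⟩

lemma maxSubsetSum_le_topSum {n : ℕ} (z : Fin n → ℝ) (l : ℕ) (hl : l ≤ n) :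
    maxSubsetSum z l ≤ topSum z l := by
  set π := Tuple.sort z with hπ
  have hne : ((univ : Finset (Fin n)).powersetCard l).Nonempty :=
    Finset.powersetCard_nonempty.mpr (by simpa using hl)
  have hmax : maxSubsetSum z l = ((univ : Finset (Fin n)).powersetCard l).sup' hne
      (fun T => ∑ i ∈ T, z i) := dif_pos hne
  rw [hmax]
  apply Finset.sup'_le
  intro S hS
  obtain ⟨-, hcard⟩ := Finset.mem_powersetCard.mp hS
  have h1 : ∑ i ∈ S, z i = ∑ j : Fin n, (if π j ∈ S then (1:ℝ) else 0) * z (π j) := by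
    calc ∑ i ∈ S, z i = ∑ i : Fin n, (if i ∈ S then (1:ℝ) else 0) * z i := by
            simp [ite_mul, Finset.sum_ite_mem]
      _ = _ := (Equiv.sum_comp π (fun i => (if i ∈ S then (1:ℝ) else 0) * z i)).symm
  have h2 : topSum z l = ∑ j : Fin n, (if n - l ≤ (j : ℕ) then (1:ℝ) else 0) * z (π j) := by
    rw [topSum, Finset.sum_filter]
    simp [ite_mul, hπ]
  rw [h1, h2]
  have key : ∑ j : Fin n, z (π j) *
      ((if π j ∈ S then (1:ℝ) else 0) - (if n - l ≤ (j : ℕ) then (1:ℝ) else 0)) ≤ 0 := by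
    apply abel_nonpos_fin n (fun j => z (π j))
    · exact Tuple.monotone_sort z
    · intro m hm
      rw [Finset.sum_sub_distrib]
      have hA : ∑ j ∈ univ.filter (fun j : Fin n => (j : ℕ) < m),
          (if π j ∈ S then (1:ℝ) else 0)
          = ((univ.filter fun j : Fin n => (j : ℕ) < m ∧ π j ∈ S).card : ℝ) := by
        rw [Finset.sum_boole, Finset.filter_filter]
      have hB : ∑ j ∈ univ.filter (fun j : Fin n => (j : ℕ) < m),
          (if n - l ≤ (j : ℕ) then (1:ℝ) else 0)
          = ((univ.filter fun j : Fin n => (j : ℕ) < m ∧ n - l ≤ (j : ℕ)).card : ℝ) := by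
        rw [Finset.sum_boole, Finset.filter_filter]
      rw [hA, hB, sub_nonneg, Nat.cast_le]
      -- B card = m - (n - l)
      have hBcard : (univ.filter fun j : Fin n => (j : ℕ) < m ∧ n - l ≤ (j : ℕ)).card
          = m - (n - l) := by
        rw [card_filter_coe n (fun a => a < m ∧ n - l ≤ a)]
        have : (range n).filter (fun j => j < m ∧ n - l ≤ j) = Ico (n - l) m := by
          ext j; simp only [Finset.mem_filter, Finset.mem_range, Finset.mem_Ico]; omega
        rw [this, Nat.card_Ico]
      -- A card ≥ l - (n - m)
      have hsplit := Finset.card_filter_add_card_filter_not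
        (s := univ.filter fun j : Fin n => π j ∈ S) (p := fun j => (j : ℕ) < m)
      rw [Finset.filter_filter, Finset.filter_filter, card_filter_sort_mem, hcard] at hsplit
      have hle : ((univ : Finset (Fin n)).filter fun j => π j ∈ S ∧ ¬ (j : ℕ) < m).card
          ≤ (univ.filter fun j : Fin n => m ≤ (j : ℕ)).card := by
        apply Finset.card_le_card
        intro j hj
        simp only [Finset.mem_filter, Finset.mem_univ, true_and] at hj ⊢
        omega
      rw [card_filter_ge] at hle
      have hAcomm : (univ.filter fun j : Fin n => (j : ℕ) < m ∧ π j ∈ S).card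
          = ((univ : Finset (Fin n)).filter fun j => π j ∈ S ∧ (j : ℕ) < m).card := by
        congr 1; ext j; simp [and_comm]
      rw [hBcard, hAcomm]
      omega
    · rw [Finset.sum_sub_distrib]
      have hA : ∑ j : Fin n, (if π j ∈ S then (1:ℝ) else 0)
          = ((univ.filter fun j : Fin n => π j ∈ S).card : ℝ) := Finset.sum_boole _ _
      have hB : ∑ j : Fin n, (if n - l ≤ (j : ℕ) then (1:ℝ) else 0)
          = ((univ.filter fun j : Fin n => n - l ≤ (j : ℕ)).card : ℝ) := Finset.sum_boole _ _
      rw [hA, hB, card_filter_sort_mem, hcard, card_filter_ge, sub_eq_zero]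
      congr 1
      omega
  have expand : ∀ j : Fin n, z (π j) *
      ((if π j ∈ S then (1:ℝ) else 0) - (if n - l ≤ (j : ℕ) then (1:ℝ) else 0))
      = (if π j ∈ S then (1:ℝ) else 0) * z (π j)
        - (if n - l ≤ (j : ℕ) then (1:ℝ) else 0) * z (π j) := by
    intro j; ring
  rw [Finset.sum_congr rfl (fun j _ => expand j), Finset.sum_sub_distrib] at key
  linarith
lemma sum_filter_lt_eq (n m : ℕ) (f : Fin n → ℝ) :
    ∑ j ∈ univ.filter (fun j : Fin n => (j : ℕ) < m), f j
      = ∑ j, f j - ∑ j ∈ univ.filter (fun j : Fin n => m ≤ (j : ℕ)), f j := by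
  have hset : (univ.filter fun j : Fin n => ¬ (j : ℕ) < m)
      = univ.filter (fun j : Fin n => m ≤ (j : ℕ)) := by
    ext j; simp only [Finset.mem_filter, Finset.mem_univ, true_and]; omega
  rw [eq_sub_iff_add_eq, ← hset, Finset.sum_filter_add_sum_filter_not]

lemma exists_perm_sum_le {n : ℕ} (x y : Fin n → ℝ) (hxy : Majorizes x y) (a : Fin n → ℝ) :
    ∃ σ : Equiv.Perm (Fin n), ∑ i, a i * x i ≤ ∑ i, a i * y (σ i) := by
  set ρ := Tuple.sort a with hρ
  set τ := Tuple.sort x with hτ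
  set π := Tuple.sort y with hπ
  refine ⟨ρ.symm.trans π, ?_⟩
  have hR : ∑ i, a i * y ((ρ.symm.trans π) i) = ∑ j, a (ρ j) * y (π j) := by
    calc ∑ i, a i * y ((ρ.symm.trans π) i)
        = ∑ j, a (ρ j) * y ((ρ.symm.trans π) (ρ j)) :=
          (Equiv.sum_comp ρ (fun i => a i * y ((ρ.symm.trans π) i))).symm
      _ = ∑ j, a (ρ j) * y (π j) := by
          apply Finset.sum_congr rfl; intro j _; simp
  have hL : ∑ i, a i * x i = ∑ j, a (ρ j) * x (ρ j) :=
    (Equiv.sum_comp ρ (fun i => a i * x i)).symm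
  rw [hL, hR]
  have mono_a : Monotone (fun j => a (ρ j)) := Tuple.monotone_sort a
  have mono_x : Monotone (fun j => x (τ j)) := Tuple.monotone_sort x
  have step1 : ∑ j, a (ρ j) * x (ρ j) ≤ ∑ j, a (ρ j) * x (τ j) := by
    have h := (mono_a.monovary mono_x).sum_smul_comp_perm_le_sum_smul
      (σ := ρ.trans τ.symm)
    simp only [smul_eq_mul, Equiv.trans_apply, Equiv.apply_symm_apply] at h
    exact h
  have totx : ∑ j, x (τ j) = ∑ i, x i := Equiv.sum_comp τ x
  have toty : ∑ j, y (π j) = ∑ i, y i := Equiv.sum_comp π y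
  have step2 : ∑ j, a (ρ j) * x (τ j) ≤ ∑ j, a (ρ j) * y (π j) := by
    have key : ∑ j, a (ρ j) * (x (τ j) - y (π j)) ≤ 0 := by
      apply abel_nonpos_fin n _ _ mono_a
      · intro m hm
        rw [Finset.sum_sub_distrib, sub_nonneg, sum_filter_lt_eq n m, sum_filter_lt_eq n m,
          totx, toty, hxy.2]
        apply sub_le_sub_left
        by_cases hmn : n ≤ m
        · have h1 : (univ.filter fun j : Fin n => m ≤ (j : ℕ)) = ∅ := by
            ext j
            simp only [Finset.mem_filter, Finset.mem_univ, true_and,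
              Finset.notMem_empty, iff_false]
            have := j.isLt; omega
          rw [h1]; simp
        · have hmlt : m < n := by omega
          -- 1 ≤ n - m ≤ n
          have e1 : ∑ j ∈ univ.filter (fun j : Fin n => m ≤ (j : ℕ)), y (π j)
              = topSum y (n - m) := by
            rw [topSum]
            apply Finset.sum_congr _ (fun _ _ => rfl)
            ext j
            simp only [Finset.mem_filter, Finset.mem_univ, true_and]
            have := j.isLt; omega
          have e2 : ∑ j ∈ univ.filter (fun j : Fin n => m ≤ (j : ℕ)), x (τ j)
              = topSum x (n - m) := by
            rw [topSum]
            apply Finset.sum_congr _ (fun _ _ => rfl)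
            ext j
            simp only [Finset.mem_filter, Finset.mem_univ, true_and]
            have := j.isLt; omega
          rw [e1, e2]
          calc topSum x (n - m) ≤ maxSubsetSum x (n - m) :=
                topSum_le_maxSubsetSum x (n - m) (by omega)
            _ ≤ maxSubsetSum y (n - m) := hxy.1 (n - m) (by omega)
                (by rw [Fintype.card_fin]; omega)
            _ ≤ topSum y (n - m) := maxSubsetSum_le_topSum y (n - m) (by omega)
      · rw [Finset.sum_sub_distrib, totx, toty, hxy.2, sub_self]
    simp only [mul_sub] at key
    rw [Finset.sum_sub_distrib] at key
    linarith
  linarith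
lemma card_filter_mem_powersetCard (n k : ℕ) (hk1 : 1 ≤ k) (i : Fin n) :
    (((univ : Finset (Fin n)).powersetCard k).filter fun S => i ∈ S).card
      = (n - 1).choose (k - 1) := by
  have hbij : (((univ : Finset (Fin n)).powersetCard k).filter fun S => i ∈ S).card
      = ((univ.erase i).powersetCard (k - 1)).card := by
    apply Finset.card_bij' (fun S _ => S.erase i) (fun S' _ => insert i S')
    · intro S hS
      exact Finset.insert_erase (Finset.mem_filter.mp hS).2
    · intro S' hS'
      exact Finset.erase_insert
        (fun h => (Finset.mem_erase.mp ((Finset.mem_powersetCard.mp hS').1 h)).1 rfl)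
    · intro S hS
      exact Finset.mem_powersetCard.mpr
        ⟨fun j hj => Finset.mem_erase.mpr ⟨(Finset.mem_erase.mp hj).1, Finset.mem_univ _⟩,
         by rw [Finset.card_erase_of_mem (Finset.mem_filter.mp hS).2,
              (Finset.mem_powersetCard.mp (Finset.mem_filter.mp hS).1).2]⟩
    · intro S' hS'
      have hsub := (Finset.mem_powersetCard.mp hS').1
      have hcard := (Finset.mem_powersetCard.mp hS').2
      have hiS' : i ∉ S' := fun h => (Finset.mem_erase.mp (hsub h)).1 rfl
      exact Finset.mem_filter.mpr
        ⟨Finset.mem_powersetCard.mpr ⟨Finset.subset_univ _,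
          by rw [Finset.card_insert_of_notMem hiS', hcard]; omega⟩,
         Finset.mem_insert_self _ _⟩
  rw [hbij, Finset.card_powersetCard, Finset.card_erase_of_mem (Finset.mem_univ _),
    Finset.card_univ, Fintype.card_fin]

/-- If `x ≺ y` in `ℝⁿ`, then the vector of all sums of `k` distinct components of
`x` is majorized by the corresponding vector for `y`. -/
theorem compoundVector_majorizes {n k : ℕ} (hn : 1 ≤ n) (hk1 : 1 ≤ k) (hkn : k ≤ n)
    (x y : Fin n → ℝ) (hxy : Majorizes x y) :
    Majorizes (compoundVector k x) (compoundVector k y) := by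
  classical
  set P := (Finset.univ : Finset (Fin n)).powersetCard k with hP
  -- double counting identity
  have hdc : ∀ (z : Fin n → ℝ) (T : Finset {S // S ∈ P}),
      ∑ S ∈ T, (∑ i ∈ S.1, z i)
        = ∑ i : Fin n, ((T.filter fun S => i ∈ S.1).card : ℝ) * z i := by
    intro z T
    calc ∑ S ∈ T, ∑ i ∈ S.1, z i
        = ∑ S ∈ T, ∑ i : Fin n, (if i ∈ S.1 then z i else 0) := by
          apply Finset.sum_congr rfl; intro S _
          rw [Finset.sum_ite_mem, Finset.univ_inter]
      _ = ∑ i : Fin n, ∑ S ∈ T, (if i ∈ S.1 then z i else 0) := Finset.sum_comm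
      _ = ∑ i : Fin n, ((T.filter fun S => i ∈ S.1).card : ℝ) * z i := by
          apply Finset.sum_congr rfl; intro i _
          rw [Finset.sum_ite, Finset.sum_const, Finset.sum_const_zero, add_zero,
            nsmul_eq_mul]
  constructor
  · -- the inequalities
    intro l hl1 hl2
    have hne : ((univ : Finset {S // S ∈ P}).powersetCard l).Nonempty := by
      rw [Finset.powersetCard_nonempty, Finset.card_univ]
      exact hl2
    have hmaxx : maxSubsetSum (compoundVector k x) l
        = ((univ : Finset {S // S ∈ P}).powersetCard l).sup' hne
          (fun T => ∑ S ∈ T, compoundVector k x S) := dif_pos hne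
    have hmaxy : maxSubsetSum (compoundVector k y) l
        = ((univ : Finset {S // S ∈ P}).powersetCard l).sup' hne
          (fun T => ∑ S ∈ T, compoundVector k y S) := dif_pos hne
    rw [hmaxx, hmaxy]
    apply Finset.sup'_le
    intro T hT
    obtain ⟨-, hTcard⟩ := Finset.mem_powersetCard.mp hT
    have hex := exists_perm_sum_le x y hxy
      (fun i => ((T.filter fun S => i ∈ S.1).card : ℝ))
    obtain ⟨σ, hσ⟩ := hex
    have hx : ∑ S ∈ T, compoundVector k x S
        = ∑ i : Fin n, ((T.filter fun S => i ∈ S.1).card : ℝ) * x i := hdc x T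
    -- the image collection
    have hmem_e : ∀ S : {S // S ∈ P}, S.1.image σ ∈ P :=
      fun S => Finset.mem_powersetCard.mpr ⟨Finset.subset_univ _, by
        rw [Finset.card_image_of_injective _ σ.injective,
          (Finset.mem_powersetCard.mp S.2).2]⟩
    set e : {S // S ∈ P} → {S // S ∈ P} := fun S => ⟨S.1.image σ, hmem_e S⟩ with he
    have einj : Function.Injective e := by
      intro S S' h
      exact Subtype.ext (Finset.image_injective σ.injective (congrArg Subtype.val h))
    have hT'mem : T.image e ∈ (univ : Finset {S // S ∈ P}).powersetCard l :=
      Finset.mem_powersetCard.mpr ⟨Finset.subset_univ _,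
        by rw [Finset.card_image_of_injective _ einj, hTcard]⟩
    have hy : ∑ S ∈ T.image e, compoundVector k y S
        = ∑ i : Fin n, ((T.filter fun S => i ∈ S.1).card : ℝ) * y (σ i) := by
      rw [Finset.sum_image (fun a _ b _ h => einj h)]
      have : ∀ S : {S // S ∈ P}, compoundVector k y (e S) = ∑ i ∈ S.1, y (σ i) := by
        intro S
        show ∑ j ∈ S.1.image σ, y j = ∑ i ∈ S.1, y (σ i)
        rw [Finset.sum_image (fun a _ b _ h => σ.injective h)]
      rw [Finset.sum_congr rfl (fun S _ => this S)]
      exact hdc (fun i => y (σ i)) T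
    calc ∑ S ∈ T, compoundVector k x S
        = ∑ i : Fin n, ((T.filter fun S => i ∈ S.1).card : ℝ) * x i := hx
      _ ≤ ∑ i : Fin n, ((T.filter fun S => i ∈ S.1).card : ℝ) * y (σ i) := hσ
      _ = ∑ S ∈ T.image e, compoundVector k y S := hy.symm
      _ ≤ _ := Finset.le_sup' (fun T => ∑ S ∈ T, compoundVector k y S) hT'mem
  · -- equal total sums
    have main : ∀ z : Fin n → ℝ, ∑ S, compoundVector k z S
        = ((n - 1).choose (k - 1) : ℝ) * ∑ i, z i := by
      intro z
      calc ∑ S : {S // S ∈ P}, compoundVector k z S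
          = ∑ S ∈ (univ : Finset {S // S ∈ P}), ∑ i ∈ S.1, z i := rfl
        _ = ∑ i : Fin n, (((univ : Finset {S // S ∈ P}).filter
              fun S => i ∈ S.1).card : ℝ) * z i := hdc z univ
        _ = ∑ i : Fin n, ((n - 1).choose (k - 1) : ℝ) * z i := by
            apply Finset.sum_congr rfl; intro i _
            congr 2
            have hcc : ((univ : Finset {S // S ∈ P}).filter fun S => i ∈ S.1).card
                = (P.filter fun S => i ∈ S).card := by
              apply Finset.card_bij (fun S _ => S.1)
              · intro S hS
                rw [Finset.mem_filter] at hS ⊢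
                exact ⟨S.2, hS.2⟩
              · intro S _ S' _ h; exact Subtype.ext h
              · intro S hS
                rw [Finset.mem_filter] at hS
                exact ⟨⟨S, hS.1⟩, Finset.mem_filter.mpr ⟨Finset.mem_univ _, hS.2⟩, rfl⟩
            rw [hcc, hP, card_filter_mem_powersetCard n k hk1 i]
        _ = ((n - 1).choose (k - 1) : ℝ) * ∑ i, z i := by rw [← Finset.mul_sum]
    rw [main x, main y, hxy.2]
end
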